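/- For every n ≥ 2 and every m ≥ 1: f₂(n,m) = m if m ≤ n/2; f₂(n,m) = n − m if n/2 < m < n − 1; and f₂(n,m) = 1 if m ≥ n − 1. -/

import Mathlib

open Finset

/-- The union of the first `k` sets in the ordering `π` (positions `1,…,k`,
i.e. 0-based indices `< k`). -/
def unionUpTo {α : Type*} [DecidableEq α] {m : ℕ} (X : Fin m → Finset α)
    (π : Equiv.Perm (Fin m)) (k : ℕ) : Finset α :=
  (Finset.univ.filter (fun i : Fin m => (i : ℕ) < k)).biUnion (fun i => X (π i))

/-- `Δ(𝒳,π,k) = |X_{π(1)} ∪ ⋯ ∪ X_{π(k)}| − k`. -/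
def delta {α : Type*} [DecidableEq α] {m : ℕ} (X : Fin m → Finset α)
    (π : Equiv.Perm (Fin m)) (k : ℕ) : ℤ :=
  ((unionUpTo X π k).card : ℤ) - k

/-- `Δ(𝒳,π) = max_{1 ≤ k ≤ m} Δ(𝒳,π,k)`. -/
noncomputable def DeltaPerm {α : Type*} [DecidableEq α] {m : ℕ} (X : Fin m → Finset α)
    (π : Equiv.Perm (Fin m)) : ℤ :=
  sSup {d : ℤ | ∃ k : ℕ, 1 ≤ k ∧ k ≤ m ∧ d = delta X π k}

/-- `Δ(𝒳) = min_π Δ(𝒳,π)`. -/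
noncomputable def DeltaMin {α : Type*} [DecidableEq α] {m : ℕ} (X : Fin m → Finset α) : ℤ :=
  sInf {d : ℤ | ∃ π : Equiv.Perm (Fin m), d = DeltaPerm X π}

/-- `f_c(n,m) = max_{𝒳 ∈ S(n,m,c)} Δ(𝒳)`, families of `m` subsets of an
`n`-element ground set, each of size at most `c`. -/
noncomputable def fFam (n m c : ℕ) : ℤ :=
  sSup {d : ℤ | ∃ X : Fin m → Finset (Fin n), (∀ i, (X i).card ≤ c) ∧ d = DeltaMin X}

/-!
Let `U` be the union of a family of `m` sets of size at most two. A prefix of `k` sets covers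
at most `2k` points, so `Δ ≤ m`. Moreover the family can be ordered so that every prefix of `k`
sets covers at most `k + max 1 (|U| - m)` points: if some set owns a point lying in no other set,
put it last and induct, the remaining sets covering one point fewer; otherwise every point is
covered twice, so `|U| ≤ m` by double counting and any set may go last. Hence
`f₂(n,m) ≤ min m (max 1 (n - m))`. Conversely, the whole family gives `Δ ≥ |U| - m` and, when all
sets are pairs, the first set gives `Δ ≥ 1`; the pairs `{2i, 2i + 1}` modulo `n` cover
`min n (2m)` points, which shows `f₂(n,m) = min m (max 1 (n - m))`.
-/

section Ordering

variable {α : Type*} [DecidableEq α] {m : ℕ}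

lemma unionUpTo_of_le (X : Fin m → Finset α) (π : Equiv.Perm (Fin m)) {k : ℕ} (h : m ≤ k) :
    unionUpTo X π k = univ.biUnion X := by
  ext a
  simp only [unionUpTo, mem_biUnion, mem_filter, mem_univ, true_and]
  refine ⟨fun ⟨i, _, ha⟩ => ⟨π i, ha⟩, fun ⟨i, ha⟩ => ⟨π.symm i, ?_, by simpa using ha⟩⟩
  exact (π.symm i).isLt.trans_le h

lemma card_unionUpTo_le_mul {c : ℕ} {X : Fin m → Finset α} (hX : ∀ i, #(X i) ≤ c)
    (π : Equiv.Perm (Fin m)) (k : ℕ) : #(unionUpTo X π k) ≤ c * k :=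
  calc #(unionUpTo X π k) ≤ #{i : Fin m | i < k} * c :=
        card_biUnion_le_card_mul _ _ _ fun i _ => hX (π i)
    _ ≤ c * k := by rw [Fin.card_filter_val_lt, mul_comm]; gcongr; exact min_le_right _ _

/-- The ordering of `Fin (m + 1)` that lists the indices other than `j` according to `σ`
and then `j`. -/
def extendPerm (j : Fin (m + 1)) (σ : Equiv.Perm (Fin m)) : Equiv.Perm (Fin (m + 1)) :=
  ((finSuccEquiv' (Fin.last m)).trans (Equiv.optionCongr σ)).trans (finSuccEquiv' j).symm

lemma extendPerm_castSucc (j : Fin (m + 1)) (σ : Equiv.Perm (Fin m)) (i : Fin m) :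
    extendPerm j σ i.castSucc = j.succAbove (σ i) := by
  simp [extendPerm, finSuccEquiv'_last_apply_castSucc]

lemma unionUpTo_extendPerm (X : Fin (m + 1) → Finset α) (j : Fin (m + 1))
    (σ : Equiv.Perm (Fin m)) {k : ℕ} (hk : k ≤ m) :
    unionUpTo X (extendPerm j σ) k = unionUpTo (X ∘ j.succAbove) σ k := by
  ext a
  simp only [unionUpTo, mem_biUnion, mem_filter, mem_univ, true_and, Function.comp_apply]
  constructor
  · rintro ⟨i, hik, ha⟩
    obtain ⟨i, rfl⟩ : ∃ i' : Fin m, i'.castSucc = i := ⟨⟨i, by omega⟩, rfl⟩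
    exact ⟨i, hik, by rwa [extendPerm_castSucc] at ha⟩
  · rintro ⟨i, hik, ha⟩
    exact ⟨i.castSucc, hik, by rwa [extendPerm_castSucc]⟩

lemma card_biUnion_le_of_two_le_card_filter (X : Fin m → Finset α) (hX : ∀ i, #(X i) ≤ 2)
    (h : ∀ x ∈ univ.biUnion X, 2 ≤ #{i | x ∈ X i}) : #(univ.biUnion X) ≤ m := by
  have hcount : ∑ x ∈ univ.biUnion X, #{i | x ∈ X i} = ∑ i, #(X i) := by
    simp only [card_filter]
    rw [sum_comm]
    refine sum_congr rfl fun i _ => ?_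
    rw [← card_filter, filter_mem_eq_inter,
      inter_eq_right.mpr (subset_biUnion_of_mem X (mem_univ i))]
  have := card_nsmul_le_sum _ _ _ h
  have := sum_le_card_nsmul univ (fun i => #(X i)) 2 fun i _ => hX i
  simp only [smul_eq_mul, card_univ, Fintype.card_fin] at *
  omega

def excess (X : Fin m → Finset α) : ℕ :=
  max 1 (#(univ.biUnion X) - m)

lemma exists_excess_succAbove_le (X : Fin (m + 1) → Finset α) (hX : ∀ i, #(X i) ≤ 2) :
    ∃ j : Fin (m + 1), excess (X ∘ j.succAbove) ≤ excess X := by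
  simp only [excess]
  have hsub (j : Fin (m + 1)) : univ.biUnion (X ∘ j.succAbove) ⊆ univ.biUnion X :=
    biUnion_subset.mpr fun i _ => subset_biUnion_of_mem X (mem_univ _)
  by_cases hprivate : ∃ j, ∃ x ∈ X j, ∀ i ≠ j, x ∉ X i
  · obtain ⟨j, x, hxj, hx⟩ := hprivate
    refine ⟨j, ?_⟩
    have : #(univ.biUnion (X ∘ j.succAbove)) < #(univ.biUnion X) := by
      refine card_lt_card ((ssubset_iff_of_subset (hsub j)).mpr ⟨x, ?_, ?_⟩)
      · exact mem_biUnion.mpr ⟨j, mem_univ _, hxj⟩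
      · simp only [mem_biUnion, mem_univ, true_and, Function.comp_apply, not_exists]
        exact fun i => hx _ (Fin.succAbove_ne j i)
    omega
  · push Not at hprivate
    have : #(univ.biUnion X) ≤ m + 1 := by
      refine card_biUnion_le_of_two_le_card_filter X hX fun x hx => ?_
      obtain ⟨j, -, hxj⟩ := mem_biUnion.mp hx
      obtain ⟨i, hij, hxi⟩ := hprivate j x hxj
      exact one_lt_card.mpr ⟨i, by simpa using hxi, j, by simpa using hxj, hij⟩
    refine ⟨0, ?_⟩
    have := card_le_card (hsub 0)
    omega

lemma card_unionUpTo_le_of_le (X : Fin m → Finset α) (π : Equiv.Perm (Fin m)) {k : ℕ}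
    (hk : m ≤ k) : #(unionUpTo X π k) ≤ k + excess X := by
  rw [unionUpTo_of_le X π hk, excess]
  omega

theorem exists_perm_card_unionUpTo_le :
    ∀ {m : ℕ} (X : Fin m → Finset α), (∀ i, #(X i) ≤ 2) →
      ∃ π : Equiv.Perm (Fin m), ∀ k ≤ m, #(unionUpTo X π k) ≤ k + excess X
  | 0, X, _ => ⟨1, fun _ hk => card_unionUpTo_le_of_le X 1 (Nat.zero_le _)⟩
  | m + 1, X, hX => by
    obtain ⟨j, hj⟩ := exists_excess_succAbove_le X hX
    obtain ⟨σ, hσ⟩ := exists_perm_card_unionUpTo_le (X ∘ j.succAbove) fun i => hX _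
    refine ⟨extendPerm j σ, fun k hk => ?_⟩
    rcases Nat.lt_or_ge k (m + 1) with hkm | hkm
    · rw [unionUpTo_extendPerm X j σ (by omega)]
      have := hσ k (by omega)
      omega
    · exact card_unionUpTo_le_of_le X _ hkm

end Ordering

section Delta

variable {α : Type*} [DecidableEq α] {m : ℕ} (X : Fin m → Finset α)

lemma bddAbove_delta (π : Equiv.Perm (Fin m)) :
    BddAbove {d : ℤ | ∃ k : ℕ, 1 ≤ k ∧ k ≤ m ∧ d = delta X π k} :=
  ((Set.finite_Icc 1 m).image (delta X π)).bddAbove.mono <| by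
    rintro _ ⟨k, hk1, hkm, rfl⟩
    exact ⟨k, ⟨hk1, hkm⟩, rfl⟩

lemma delta_le_DeltaPerm (π : Equiv.Perm (Fin m)) {k : ℕ} (hk1 : 1 ≤ k) (hkm : k ≤ m) :
    delta X π k ≤ DeltaPerm X π :=
  le_csSup (bddAbove_delta X π) ⟨k, hk1, hkm, rfl⟩

lemma DeltaPerm_le {π : Equiv.Perm (Fin m)} (hm : 1 ≤ m) {B : ℤ}
    (h : ∀ k, 1 ≤ k → k ≤ m → delta X π k ≤ B) : DeltaPerm X π ≤ B :=
  csSup_le ⟨delta X π 1, 1, le_rfl, hm, rfl⟩ fun _ ⟨k, hk1, hkm, hd⟩ => hd ▸ h k hk1 hkm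

lemma DeltaMin_le (π : Equiv.Perm (Fin m)) : DeltaMin X ≤ DeltaPerm X π :=
  csInf_le ((Set.finite_range (DeltaPerm X)).bddBelow.mono <| by
    rintro _ ⟨τ, rfl⟩; exact ⟨τ, rfl⟩) ⟨π, rfl⟩

lemma le_DeltaMin {B : ℤ} (h : ∀ π, B ≤ DeltaPerm X π) : B ≤ DeltaMin X :=
  le_csInf ⟨DeltaPerm X 1, 1, rfl⟩ fun _ ⟨π, hd⟩ => hd ▸ h π

variable {X}

theorem DeltaMin_le_min (hm : 1 ≤ m) (hX : ∀ i, #(X i) ≤ 2) :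
    DeltaMin X ≤ min m (excess X) := by
  obtain ⟨π, hπ⟩ := exists_perm_card_unionUpTo_le X hX
  refine (DeltaMin_le X π).trans (DeltaPerm_le X hm fun k _ hkm => ?_)
  have := hπ k hkm
  have := card_unionUpTo_le_mul hX π k
  simp only [delta]
  omega

lemma card_biUnion_sub_le_DeltaMin (hm : 1 ≤ m) : (#(univ.biUnion X) : ℤ) - m ≤ DeltaMin X :=
  le_DeltaMin X fun π => by
    simpa only [delta, unionUpTo_of_le X π le_rfl] using delta_le_DeltaPerm X π hm le_rfl

lemma sub_one_le_DeltaMin (hm : 1 ≤ m) {c : ℕ} (hX : ∀ i, c ≤ #(X i)) :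
    (c : ℤ) - 1 ≤ DeltaMin X :=
  le_DeltaMin X fun π => by
    refine le_trans ?_ (delta_le_DeltaPerm X π le_rfl hm)
    have : X (π ⟨0, hm⟩) ⊆ unionUpTo X π 1 :=
      subset_biUnion_of_mem (fun i => X (π i)) (by simp)
    have := (hX _).trans (card_le_card this)
    simp only [delta]
    omega

end Delta

section Extremal

variable {n m c : ℕ}

lemma DeltaMin_le_fFam {X : Fin m → Finset (Fin n)} (hX : ∀ i, #(X i) ≤ c) :
    DeltaMin X ≤ fFam n m c :=
  le_csSup ((Set.finite_range (DeltaMin (α := Fin n) (m := m))).bddAbove.mono <| by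
    rintro _ ⟨X, -, rfl⟩; exact ⟨X, rfl⟩) ⟨X, hX, rfl⟩

lemma fFam_le {B : ℤ} (h : ∀ X : Fin m → Finset (Fin n), (∀ i, #(X i) ≤ c) → DeltaMin X ≤ B) :
    fFam n m c ≤ B :=
  csSup_le ⟨_, fun _ => ∅, by simp, rfl⟩ fun _ ⟨X, hX, hd⟩ => hd ▸ h X hX

lemma exists_card_eq_two_card_biUnion_eq (hn : 2 ≤ n) :
    ∃ X : Fin m → Finset (Fin n), (∀ i, #(X i) = 2) ∧ #(univ.biUnion X) = min n (2 * m) := by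
  have : NeZero n := ⟨by omega⟩
  refine ⟨fun i => {Fin.ofNat n (2 * i), Fin.ofNat n (2 * i + 1)}, fun i => ?_, ?_⟩
  · refine card_pair fun h => ?_
    have h : (2 * i + 1) % n = 2 * i % n := by
      simpa only [Fin.ext_iff, Fin.val_ofNat] using h.symm
    have h1 : 1 ≡ 0 [MOD n] := Nat.ModEq.add_left_cancel' (2 * i) h
    have := Nat.le_of_dvd one_pos (Nat.modEq_zero_iff_dvd.mp h1)
    omega
  · have hunion : univ.biUnion (fun i : Fin m => {Fin.ofNat n (2 * i), Fin.ofNat n (2 * i + 1)}) =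
        (range (2 * m)).image (Fin.ofNat n) := by
      ext x
      simp only [mem_biUnion, mem_univ, true_and, mem_insert, mem_singleton, mem_image, mem_range]
      constructor
      · rintro ⟨i, rfl | rfl⟩
        · exact ⟨2 * i, by omega, rfl⟩
        · exact ⟨2 * i + 1, by omega, rfl⟩
      · rintro ⟨j, hj, rfl⟩
        refine ⟨⟨j / 2, by omega⟩, ?_⟩
        obtain h | h : j = 2 * (j / 2) ∨ j = 2 * (j / 2) + 1 := by omega
        exacts [Or.inl (congrArg _ h), Or.inr (congrArg _ h)]
    rw [hunion]
    rcases le_total (2 * m) n with h | h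
    · rw [card_image_of_injOn, card_range, min_eq_right h]
      intro a ha b hb hab
      simp only [coe_range, Set.mem_Iio] at ha hb
      simpa [Fin.ext_iff, Nat.mod_eq_of_lt (ha.trans_le h), Nat.mod_eq_of_lt (hb.trans_le h)]
        using hab
    · rw [min_eq_left h, eq_univ_of_forall fun x : Fin n => mem_image.mpr
        ⟨x.val, mem_range.mpr (x.isLt.trans_le h), Fin.ofNat_val_eq_self x⟩,
        card_univ, Fintype.card_fin]

theorem fFam_two_eq (hn : 2 ≤ n) (hm : 1 ≤ m) :
    fFam n m 2 = min (m : ℤ) (max 1 (n - m)) := by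
  refine le_antisymm (fFam_le fun X hX => (DeltaMin_le_min hm hX).trans ?_) ?_
  · rw [excess]
    have := card_le_univ (univ.biUnion X)
    simp only [Fintype.card_fin] at this
    omega
  · obtain ⟨X, hX2, hU⟩ := exists_card_eq_two_card_biUnion_eq (m := m) hn
    have := card_biUnion_sub_le_DeltaMin (X := X) hm
    have := sub_one_le_DeltaMin hm fun i => (hX2 i).ge
    have := DeltaMin_le_fFam fun i => (hX2 i).le
    omega

end Extremal

/-- The value of `f₂(n,m)`: it equals `m` for `m ≤ n/2`, equals `n − m` for
`n/2 < m < n − 1`, and equals `1` for `m ≥ n − 1`. -/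
theorem f2_values (n m : ℕ) (hn : 2 ≤ n) (hm : 1 ≤ m) :
    (2 * m ≤ n → fFam n m 2 = m) ∧
    (n < 2 * m → m + 1 < n → fFam n m 2 = (n : ℤ) - m) ∧
    (n ≤ m + 1 → fFam n m 2 = 1) := by
  rw [fFam_two_eq hn hm]
  omega
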